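/- The map G is continuous with respect to the sup norm: for any two states s and o with ‖s − o‖_∞ ≤ ε, one has |G_{k,i}(s) − G_{k,i}(o)| ≤ (1 + 2x_cλ/μ + 2x_cλ·k_max/(k̄·μ))·ε for all k ∈ K and i ≥ 1. -/

import Mathlib

/-!
Solving the defining equation, `G_{k,i}(s) = w·s_{k,i-1} + (1 - w)·s_{k,i+1}` is a convex combination
with weight `w = x_cλ z/(x_cλ z + μ)`. Comparing two states, the change of the averaged values costs
`ε`, and the change of the weight costs at most `x_cλ |z(s) - z(o)|/μ` times `|o_{k,i-1} - o_{k,i+1}| ≤ 1`.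
Since `z` is linear in the state with nonnegative coefficients summing to `1 + k/k̄`,
`|z(s) - z(o)| ≤ (1 + k_max/k̄)·ε`.
-/

open Finset Filter

/-- `zfun K p kbar s k i` is the quantity `z_{k,i+1}(s)` of the graph mean field model:
`(1/2) * Σ_{k'∈K} ((k'+k)/k̄) p(k') (s_{k',i} + s_{k',i+1})`. -/
noncomputable def zfun (K : Finset ℕ) (p : ℕ → ℝ) (kbar : ℝ) (s : ℕ → ℕ → ℝ) (k i : ℕ) : ℝ :=
  (1/2) * ∑ k' ∈ K, (((k' : ℝ) + (k : ℝ)) / kbar) * p k' * (s k' i + s k' (i+1))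

theorem abs_div_add_sub_div_add_le {α α' μ : ℝ} (hα : 0 ≤ α) (hα' : 0 ≤ α') (hμ : 0 < μ) :
    |α / (α + μ) - α' / (α' + μ)| ≤ |α - α'| / μ := by
  have hD : 0 < α + μ := by linarith
  have hD' : 0 < α' + μ := by linarith
  rw [div_sub_div _ _ hD.ne' hD'.ne', abs_div, abs_of_pos (mul_pos hD hD'),
    div_le_div_iff₀ (mul_pos hD hD') hμ]
  have hnum : α * (α' + μ) - (α + μ) * α' = μ * (α - α') := by ring
  rw [hnum, abs_mul, abs_of_pos hμ]
  have hprod : μ * μ ≤ (α + μ) * (α' + μ) := by nlinarith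
  nlinarith [abs_nonneg (α - α')]

/-- Two weighted averages `G = w u + (1 - w) v`, `G' = w' u' + (1 - w') v'` with weights
`w = α/(α + μ)`, `w' = α'/(α' + μ)`. -/
theorem abs_sub_le_of_mul_add_eq {α α' μ G G' u u' v v' ε : ℝ} (hα : 0 ≤ α) (hα' : 0 ≤ α')
    (hμ : 0 < μ) (hG : G * (α + μ) = α * u + μ * v) (hG' : G' * (α' + μ) = α' * u' + μ * v')
    (hu : |u - u'| ≤ ε) (hv : |v - v'| ≤ ε) (hu'v' : |u' - v'| ≤ 1) :
    |G - G'| ≤ ε + |α - α'| / μ := by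
  set w := α / (α + μ)
  set w' := α' / (α' + μ)
  have hD : 0 < α + μ := by linarith
  have hD' : 0 < α' + μ := by linarith
  have hw0 : 0 ≤ w := div_nonneg hα hD.le
  have hw1 : w ≤ 1 := (div_le_one hD).mpr (by linarith)
  have hGw : G = v + w * (u - v) := by
    simp only [w]; field_simp; linear_combination hG
  have hGw' : G' = v' + w' * (u' - v') := by
    simp only [w']; field_simp; linear_combination hG'
  have hsplit : G - G' = (1 - w) * (v - v') + w * (u - u') + (w - w') * (u' - v') := by
    rw [hGw, hGw']; ring
  have hww' : |w - w'| ≤ |α - α'| / μ := abs_div_add_sub_div_add_le hα hα' hμ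
  calc |G - G'|
      ≤ |(1 - w) * (v - v')| + |w * (u - u')| + |(w - w') * (u' - v')| := by
        rw [hsplit]; exact abs_add_three _ _ _
    _ ≤ (1 - w) * ε + w * ε + |α - α'| / μ * 1 := by
        rw [abs_mul, abs_mul, abs_mul, abs_of_nonneg (by linarith : 0 ≤ 1 - w), abs_of_nonneg hw0]
        gcongr
    _ = ε + |α - α'| / μ := by ring

section zfun

variable {K : Finset ℕ} {p : ℕ → ℝ} {kbar : ℝ}

theorem zfun_sub (s o : ℕ → ℕ → ℝ) (k i : ℕ) :
    zfun K p kbar s k i - zfun K p kbar o k i = zfun K p kbar (s - o) k i := by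
  simp only [zfun, ← mul_sub, ← sum_sub_distrib, Pi.sub_apply]
  congr 1
  exact sum_congr rfl fun _ _ => by ring

theorem zfun_coeff_nonneg (hp : ∀ k ∈ K, 0 ≤ p k) (hkbar : 0 ≤ kbar) (k : ℕ) :
    ∀ k' ∈ K, 0 ≤ ((k' : ℝ) + k) / kbar * p k' :=
  fun k' hk' => mul_nonneg (div_nonneg (by positivity) hkbar) (hp k' hk')

theorem sum_zfun_coeff (hpsum : ∑ k ∈ K, p k = 1) (hkbar : kbar = ∑ k ∈ K, p k * (k : ℝ))
    (hkbar0 : kbar ≠ 0) (k : ℕ) :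
    ∑ k' ∈ K, ((k' : ℝ) + k) / kbar * p k' = 1 + k / kbar := by
  have hsplit : ∀ k' ∈ K, ((k' : ℝ) + k) / kbar * p k' = (p k' * k' + k * p k') / kbar :=
    fun _ _ => by ring
  rw [sum_congr rfl hsplit, ← sum_div, sum_add_distrib, ← mul_sum, hpsum, ← hkbar]
  field_simp

theorem zfun_nonneg (hp : ∀ k ∈ K, 0 ≤ p k) (hkbar : 0 ≤ kbar) {s : ℕ → ℕ → ℝ}
    (hs : ∀ k i, 0 ≤ s k i) (k i : ℕ) : 0 ≤ zfun K p kbar s k i :=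
  mul_nonneg (by norm_num) <| sum_nonneg fun k' hk' =>
    mul_nonneg (zfun_coeff_nonneg hp hkbar k k' hk') (add_nonneg (hs k' i) (hs k' (i + 1)))

theorem abs_zfun_le (hp : ∀ k ∈ K, 0 ≤ p k) (hpsum : ∑ k ∈ K, p k = 1)
    (hkbar : kbar = ∑ k ∈ K, p k * (k : ℝ)) (hkpos : 0 < kbar) {s : ℕ → ℕ → ℝ} {ε : ℝ}
    (hs : ∀ k i, |s k i| ≤ ε) (k i : ℕ) :
    |zfun K p kbar s k i| ≤ (1 + k / kbar) * ε := by
  have hc := zfun_coeff_nonneg hp hkpos.le k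
  calc |zfun K p kbar s k i|
      ≤ 1 / 2 * ∑ k' ∈ K, |((k' : ℝ) + k) / kbar * p k' * (s k' i + s k' (i + 1))| := by
        rw [zfun, abs_mul, abs_of_pos (by norm_num : (0 : ℝ) < 1 / 2)]
        gcongr
        exact abs_sum_le_sum_abs _ _
    _ ≤ 1 / 2 * ∑ k' ∈ K, ((k' : ℝ) + k) / kbar * p k' * (2 * ε) := by
        gcongr with k' hk'
        rw [abs_mul, abs_of_nonneg (hc k' hk')]
        gcongr
        · exact hc k' hk'
        linarith [abs_add_le (s k' i) (s k' (i + 1)), hs k' i, hs k' (i + 1)]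
    _ = (1 + k / kbar) * ε := by
        rw [← sum_mul, sum_zfun_coeff hpsum hkbar hkpos.ne' k]; ring

end zfun

theorem G_continuous_general (K : Finset ℕ) (p : ℕ → ℝ)
    (hp : ∀ k ∈ K, 0 ≤ p k) (hpsum : ∑ k ∈ K, p k = 1)
    (kbar : ℝ) (hkbar : kbar = ∑ k ∈ K, p k * (k : ℝ)) (hkpos : 0 < kbar)
    (kmax : ℕ) (hkmax : ∀ k ∈ K, k ≤ kmax)
    (xcl mu : ℝ) (hx : 0 < xcl) (hmu : 0 < mu)
    (s o : ℕ → ℕ → ℝ)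
    (hsnn : ∀ k i, 0 ≤ s k i)
    (honn : ∀ k i, 0 ≤ o k i) (hole1 : ∀ k i, o k i ≤ 1)
    (eps : ℝ) (heps : 0 ≤ eps) (hclose : ∀ k i, |s k i - o k i| ≤ eps)
    (Gs Go : ℕ → ℕ → ℝ)
    (hGs : ∀ k ∈ K, ∀ i : ℕ,
      xcl * Gs k i * zfun K p kbar s k i + mu * Gs k i
        = xcl * s k i * zfun K p kbar s k i + mu * s k (i+2))
    (hGo : ∀ k ∈ K, ∀ i : ℕ,
      xcl * Go k i * zfun K p kbar o k i + mu * Go k i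
        = xcl * o k i * zfun K p kbar o k i + mu * o k (i+2)) :
    ∀ k ∈ K, ∀ i : ℕ,
      |Gs k i - Go k i| ≤ (1 + 2 * xcl / mu + 2 * xcl * (kmax : ℝ) / (kbar * mu)) * eps := by
  intro k hk i
  have hz : |zfun K p kbar s k i - zfun K p kbar o k i| ≤ (1 + kmax / kbar) * eps := by
    rw [zfun_sub]
    refine (abs_zfun_le hp hpsum hkbar hkpos hclose k i).trans ?_
    gcongr
    exact_mod_cast hkmax k hk
  have ho : |o k i - o k (i + 2)| ≤ 1 :=
    abs_sub_le_iff.mpr ⟨by linarith [hole1 k i, honn k (i + 2)],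
      by linarith [honn k i, hole1 k (i + 2)]⟩
  have hG := abs_sub_le_of_mul_add_eq (G := Gs k i) (G' := Go k i)
    (mul_nonneg hx.le (zfun_nonneg hp hkpos.le hsnn k i))
    (mul_nonneg hx.le (zfun_nonneg hp hkpos.le honn k i)) hmu
    (by linear_combination hGs k hk i) (by linear_combination hGo k hk i)
    (hclose k i) (hclose k (i + 2)) ho
  rw [← mul_sub, abs_mul, abs_of_pos hx] at hG
  calc |Gs k i - Go k i|
      ≤ eps + xcl * ((1 + kmax / kbar) * eps) / mu := hG.trans (by gcongr)
    _ ≤ (1 + 2 * xcl / mu + 2 * xcl * (kmax : ℝ) / (kbar * mu)) * eps := by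
        have hslack : 0 ≤ xcl * ((1 + kmax / kbar) * eps) / mu := by positivity
        have hform : (1 + 2 * xcl / mu + 2 * xcl * (kmax : ℝ) / (kbar * mu)) * eps
            = eps + 2 * (xcl * ((1 + kmax / kbar) * eps) / mu) := by
          field_simp
          ring
        linarith

/-- Continuity of the fixed-point map `G` in the sup norm. -/
theorem G_continuous (K : Finset ℕ) (p : ℕ → ℝ)
    (hp : ∀ k ∈ K, 0 ≤ p k) (hpsum : ∑ k ∈ K, p k = 1)
    (kbar : ℝ) (hkbar : kbar = ∑ k ∈ K, p k * (k : ℝ)) (hkpos : 0 < kbar)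
    (kmax : ℕ) (hkmaxmem : kmax ∈ K) (hkmax : ∀ k ∈ K, k ≤ kmax)
    (xcl mu : ℝ) (hx : 0 < xcl) (hmu : 0 < mu)
    (s o : ℕ → ℕ → ℝ)
    (hs0 : ∀ k, s k 0 = 1) (hsmono : ∀ k i, s k (i+1) ≤ s k i)
    (hsnn : ∀ k i, 0 ≤ s k i) (hsle1 : ∀ k i, s k i ≤ 1)
    (ho0 : ∀ k, o k 0 = 1) (homono : ∀ k i, o k (i+1) ≤ o k i)
    (honn : ∀ k i, 0 ≤ o k i) (hole1 : ∀ k i, o k i ≤ 1)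
    (eps : ℝ) (heps : 0 ≤ eps) (hclose : ∀ k i, |s k i - o k i| ≤ eps)
    (Gs Go : ℕ → ℕ → ℝ)
    (hGs : ∀ k ∈ K, ∀ i : ℕ,
      xcl * Gs k i * zfun K p kbar s k i + mu * Gs k i
        = xcl * s k i * zfun K p kbar s k i + mu * s k (i+2))
    (hGo : ∀ k ∈ K, ∀ i : ℕ,
      xcl * Go k i * zfun K p kbar o k i + mu * Go k i
        = xcl * o k i * zfun K p kbar o k i + mu * o k (i+2)) :
    ∀ k ∈ K, ∀ i : ℕ,
      |Gs k i - Go k i| ≤ (1 + 2 * xcl / mu + 2 * xcl * (kmax : ℝ) / (kbar * mu)) * eps :=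
  G_continuous_general K p hp hpsum kbar hkbar hkpos kmax hkmax xcl mu hx hmu s o hsnn honn hole1
    eps heps hclose Gs Go hGs hGo
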